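/- arXiv:2109.00531 — 3 statements merged into one kernel-verified Lean document; each statement's English description precedes it below -/
import Mathlib

section
/- Let p = (p_1, p_2, …) be a sequence in [0,1] with p_q ≥ p_{q+1} for a fixed q ≥ 1, and let p' be obtained from p by swapping p_q and p_{q+1}. Denote by f_GP(i; j, p) the probability that the j-th success in independent Bernoulli trials with success probabilities p occurs exactly at trial i. Then: (i) f_GP(i; j, p) = f_GP(i; j, p') for i < q or i > q+1; (ii) f_GP(q; j, p) ≥ f_GP(q; j, p'); (iii) f_GP(q+1; j, p) ≤ f_GP(q+1; j, p'). -/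
/-- The generalized Pascal pmf: the probability that the `j`-th success among independent
Bernoulli trials `1, 2, …` with success probabilities `p` occurs exactly at trial `i`:
`f_GP(i;j,p) = ∑_{ω ⊆ {1,…,i}, |ω| = j, i ∈ ω} ∏_{l=1}^{i} p_l^{1{l∈ω}} (1−p_l)^{1{l∉ω}}`. -/
def fGP (p : ℕ → ℝ) (j i : ℕ) : ℝ :=
  ∑ ω ∈ ((Finset.Icc 1 i).powersetCard j).filter (fun ω => i ∈ ω),
    ∏ l ∈ Finset.Icc 1 i, (if l ∈ ω then p l else 1 - p l)

/-- swapping two adjacent success probabilities `p_q ≥ p_{q+1}` leaves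
`f_GP(i;j,·)` unchanged for `i < q` or `i > q+1`, does not increase it at `i = q`, and does
not decrease it at `i = q+1`. -/
theorem fGP_adjacent_swap
    (p : ℕ → ℝ) (hp : ∀ l, p l ∈ Set.Icc (0 : ℝ) 1)
    (q : ℕ) (hq : 1 ≤ q) (hmono : p (q + 1) ≤ p q)
    (p' : ℕ → ℝ)
    (hp' : ∀ l, p' l = if l = q then p (q + 1) else if l = q + 1 then p q else p l)
    (j : ℕ) (hj : 1 ≤ j) :
    (∀ i, j ≤ i → (i < q ∨ q + 1 < i) → fGP p j i = fGP p' j i)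
    ∧ (j ≤ q → fGP p' j q ≤ fGP p j q)
    ∧ (j ≤ q + 1 → fGP p j (q + 1) ≤ fGP p' j (q + 1)) := by
  have hp'mem : ∀ l, p' l ∈ Set.Icc (0:ℝ) 1 := by
    intro l; rw [hp' l]; split_ifs <;> exact hp _
  refine ⟨?_, ?_, ?_⟩
  · -- part 1
    intro i hji hcase
    rcases hcase with hlt | hgt
    · unfold fGP
      refine Finset.sum_congr rfl fun ω hω => Finset.prod_congr rfl fun l hl => ?_
      have hl2 := Finset.mem_Icc.mp hl
      have h1 : l ≠ q := by omega
      have h2 : l ≠ q + 1 := by omega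
      rw [hp' l, if_neg h1, if_neg h2]
    · -- bijection case
      unfold fGP
      set e := Equiv.swap q (q+1) with he
      have heq : e q = q + 1 := Equiv.swap_apply_left _ _
      have heq1 : e (q+1) = q := Equiv.swap_apply_right _ _
      have hei : e i = i := Equiv.swap_apply_of_ne_of_ne (by omega) (by omega)
      have hIcc : ∀ l, l ∈ Finset.Icc 1 i ↔ e l ∈ Finset.Icc 1 i := by
        intro l
        by_cases h1 : l = q
        · rw [h1, heq]; simp [Finset.mem_Icc]; omega
        by_cases h2 : l = q + 1
        · rw [h2, heq1]; simp [Finset.mem_Icc]; omega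
        · rw [Equiv.swap_apply_of_ne_of_ne h1 h2]
      have hpe : ∀ l, p' (e l) = p l := by
        intro l
        by_cases h1 : l = q
        · rw [h1, heq, hp' (q+1)]; simp
        by_cases h2 : l = q + 1
        · rw [h2, heq1, hp' q]; simp
        · rw [Equiv.swap_apply_of_ne_of_ne h1 h2, hp' l, if_neg h1, if_neg h2]
      have hmem : ∀ ω ∈ ((Finset.Icc 1 i).powersetCard j).filter (fun ω => i ∈ ω),
          ω.image e ∈ ((Finset.Icc 1 i).powersetCard j).filter (fun ω => i ∈ ω) := by
        intro ω hω
        rw [Finset.mem_filter, Finset.mem_powersetCard] at hω ⊢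
        obtain ⟨⟨hsub, hcard⟩, hiω⟩ := hω
        refine ⟨⟨?_, ?_⟩, ?_⟩
        · intro x hx
          obtain ⟨a, ha, rfl⟩ := Finset.mem_image.mp hx
          exact (hIcc a).mp (hsub ha)
        · rw [Finset.card_image_of_injective _ e.injective, hcard]
        · rw [Finset.mem_image]; exact ⟨i, hiω, hei⟩
      have hinv : ∀ ω : Finset ℕ, (ω.image e).image e = ω := by
        intro ω
        rw [Finset.image_image]
        have : (e ∘ e : ℕ → ℕ) = id := by
          funext x; exact Equiv.swap_apply_self q (q+1) x
        rw [this, Finset.image_id]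
      refine Finset.sum_nbij' (fun ω => ω.image e) (fun ω => ω.image e)
        hmem hmem (fun ω _ => hinv ω) (fun ω _ => hinv ω) ?_
      intro ω hω
      refine Finset.prod_equiv e hIcc ?_
      intro l hl
      have hmemi : e l ∈ ω.image e ↔ l ∈ ω := by
        simp [Finset.mem_image, e.injective.eq_iff]
      by_cases h : l ∈ ω
      · rw [if_pos h, if_pos (hmemi.mpr h), hpe l]
      · rw [if_neg h, if_neg (fun hc => h (hmemi.mp hc)), hpe l]
  · -- part 2: i = q
    intro hjq
    unfold fGP
    apply Finset.sum_le_sum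
    intro ω hω
    have hqω : q ∈ ω := (Finset.mem_filter.mp hω).2
    apply Finset.prod_le_prod
    · intro l hl
      rcases hp'mem l with ⟨h0, h1⟩
      split_ifs <;> linarith
    · intro l hl
      have hl2 := Finset.mem_Icc.mp hl
      by_cases h : l = q
      · rw [h, if_pos hqω, if_pos hqω, hp' q, if_pos rfl]
        exact hmono
      · rw [hp' l, if_neg h, if_neg (by omega : l ≠ q + 1)]
  · -- part 3: i = q + 1
    intro hj1
    unfold fGP
    apply Finset.sum_le_sum
    intro ω hω
    have hiω : q + 1 ∈ ω := (Finset.mem_filter.mp hω).2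
    have hdecomp : Finset.Icc 1 (q+1) = insert (q+1) (insert q (Finset.Icc 1 (q-1))) := by
      ext l; simp [Finset.mem_Icc, Finset.mem_insert]; omega
    have hn1 : (q+1) ∉ insert q (Finset.Icc 1 (q-1)) := by
      simp [Finset.mem_Icc]
    have hn2 : q ∉ Finset.Icc 1 (q-1) := by simp [Finset.mem_Icc]; omega
    rw [hdecomp, Finset.prod_insert hn1, Finset.prod_insert hn2,
      Finset.prod_insert hn1, Finset.prod_insert hn2]
    have hR : ∏ l ∈ Finset.Icc 1 (q-1), (if l ∈ ω then p' l else 1 - p' l)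
        = ∏ l ∈ Finset.Icc 1 (q-1), (if l ∈ ω then p l else 1 - p l) := by
      refine Finset.prod_congr rfl fun l hl => ?_
      have hl2 := Finset.mem_Icc.mp hl
      rw [hp' l, if_neg (by omega : l ≠ q), if_neg (by omega : l ≠ q + 1)]
    rw [hR]
    have hRnn : 0 ≤ ∏ l ∈ Finset.Icc 1 (q-1), (if l ∈ ω then p l else 1 - p l) := by
      apply Finset.prod_nonneg
      intro l hl
      rcases hp l with ⟨h0, h1⟩
      split_ifs <;> linarith
    rw [if_pos hiω, if_pos hiω, hp' (q+1), if_neg (by omega : q + 1 ≠ q), if_pos rfl, hp' q, if_pos rfl]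
    by_cases h : q ∈ ω
    · rw [if_pos h, if_pos h]; ring_nf; exact le_refl _
    · rw [if_neg h, if_neg h]
      have h1 := (hp q).2
      have h0 := (hp (q+1)).1
      nlinarith [hRnn, hmono]
end

section
/- Let ν_1 ≤ ν_2 ≤ … be a nondecreasing sequence in (0,1], let j ≤ u ≤ n with Σ_{l=1}^u ν_l > j, and let p be any rearrangement of (ν_1,…,ν_n) (extended by ν's beyond n). Then Σ_{i=j}^n i f_GP(i; j, p) ≤ (j/ν_1)(ν_u/ν_1)^j + n exp( − (Σ_{l=1}^u ν_l − j)² / (2u) ). -/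
/-!
Let `F_m(j)` be the probability of fewer than `j` successes among the first `m` trials. The
`j`-th success occurs at trial `m + 1` with probability `F_m(j) - F_{m+1}(j)`, so summation
by parts bounds the truncated expectation by `∑_{m<n} F_m(j)`, and each `F_m(j)` can only grow
when the first `m` success probabilities are replaced by the `m` smallest ones,
`ν_1, …, ν_m`.

Let `S_m` count the successes among the first `m` trials and `A_k = ∑_{m<u} P(S_m = k)`. The
recursion for `P(S_{m+1} = k)` telescopes to `ν_1 A_0 ≤ 1` and `ν_1 A_{k+1} ≤ ν_u A_k`, hence
`∑_{m<u} F_m(j) = ∑_{k<j} A_k ≤ (j/ν_1)(ν_u/ν_1)^j`. Each of the at most `n` remaining terms is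
at most `F_u(j)`, which the Chernoff bound at the tilt `j/μ`, `μ = ∑_{l ≤ u} ν_l`, together with
`log t ≤ sinh (log t)`, bounds by `exp(-(μ - j)²/(2u))`.
-/

open Finset

lemma prod_one_sub_add_mul_le_exp {α : Type*} {q : α → ℝ} {s : Finset α}
    (hq : ∀ l ∈ s, q l ∈ Set.Icc 0 1) {c : ℝ} (hc : 0 ≤ c) :
    ∏ l ∈ s, (1 - q l + q l * c) ≤ Real.exp ((c - 1) * ∑ l ∈ s, q l) := by
  rw [mul_sum, Real.exp_sum]
  refine prod_le_prod (fun l hl => ?_) fun l _ => ?_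
  · obtain ⟨h0, h1⟩ := hq l hl
    nlinarith [mul_nonneg h0 hc]
  · linarith [Real.add_one_le_exp ((c - 1) * q l)]

lemma sub_add_mul_log_div_le {x y : ℝ} (hx : 0 < x) (hxy : x ≤ y) :
    x - y + x * Real.log (y / x) ≤ -(y - x) ^ 2 / (2 * y) := by
  have hy : 0 < y := hx.trans_le hxy
  have hlog : Real.log (y / x) ≤ (y / x - x / y) / 2 := by
    have := Real.self_le_sinh_iff.2 (Real.log_nonneg ((one_le_div hx).2 hxy))
    rwa [Real.sinh_log (div_pos hy hx), inv_div] at this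
  have hmul := mul_le_mul_of_nonneg_left hlog hx.le
  have hcomp : x - y + x * ((y / x - x / y) / 2) = -(y - x) ^ 2 / (2 * y) := by
    field_simp
    ring
  linarith

section PoissonBinomial

variable {α : Type*} [DecidableEq α]

def outcomeProb (q : α → ℝ) (s ω : Finset α) : ℝ :=
  ∏ l ∈ s, if l ∈ ω then q l else 1 - q l

def successCountProb (q : α → ℝ) (s : Finset α) (k : ℕ) : ℝ :=
  ∑ ω ∈ s.powersetCard k, outcomeProb q s ω

def fewerSuccessesProb (q : α → ℝ) (s : Finset α) (j : ℕ) : ℝ :=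
  ∑ k ∈ range j, successCountProb q s k

variable {q : α → ℝ} {s : Finset α} {a : α}

lemma outcomeProb_insert_left (ha : a ∉ s) (ω : Finset α) :
    outcomeProb q (insert a s) ω = (if a ∈ ω then q a else 1 - q a) * outcomeProb q s ω :=
  prod_insert ha

lemma outcomeProb_insert_right (ha : a ∉ s) (ω : Finset α) :
    outcomeProb q s (insert a ω) = outcomeProb q s ω :=
  prod_congr rfl fun l hl => by simp only [mem_insert, ne_of_mem_of_not_mem hl ha, false_or]

lemma outcomeProb_nonneg (hq : ∀ l ∈ s, q l ∈ Set.Icc 0 1) (ω : Finset α) :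
    0 ≤ outcomeProb q s ω :=
  prod_nonneg fun l hl => by
    split_ifs
    · exact (hq l hl).1
    · exact sub_nonneg.2 (hq l hl).2

lemma successCountProb_nonneg (hq : ∀ l ∈ s, q l ∈ Set.Icc 0 1) (k : ℕ) :
    0 ≤ successCountProb q s k :=
  sum_nonneg fun ω _ => outcomeProb_nonneg hq ω

lemma fewerSuccessesProb_nonneg (hq : ∀ l ∈ s, q l ∈ Set.Icc 0 1) (j : ℕ) :
    0 ≤ fewerSuccessesProb q s j :=
  sum_nonneg fun k _ => successCountProb_nonneg hq k

lemma fewerSuccessesProb_mono (hq : ∀ l ∈ s, q l ∈ Set.Icc 0 1) {j j' : ℕ} (h : j ≤ j') :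
    fewerSuccessesProb q s j ≤ fewerSuccessesProb q s j' :=
  sum_le_sum_of_subset_of_nonneg (range_subset_range.2 h) fun k _ _ =>
    successCountProb_nonneg hq k

@[simp] lemma fewerSuccessesProb_zero : fewerSuccessesProb q s 0 = 0 := sum_range_zero _

lemma successCountProb_eq_sub (k : ℕ) :
    successCountProb q s k = fewerSuccessesProb q s (k + 1) - fewerSuccessesProb q s k := by
  rw [fewerSuccessesProb, sum_range_succ, ← fewerSuccessesProb, add_sub_cancel_left]

lemma successCountProb_empty (k : ℕ) :
    successCountProb q ∅ k = if k = 0 then 1 else 0 := by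
  cases k <;> simp [successCountProb, outcomeProb]

lemma fewerSuccessesProb_congr {q' : α → ℝ} (h : ∀ l ∈ s, q l = q' l) (j : ℕ) :
    fewerSuccessesProb q s j = fewerSuccessesProb q' s j := by
  unfold fewerSuccessesProb successCountProb outcomeProb
  refine sum_congr rfl fun _ _ => sum_congr rfl fun _ _ => prod_congr rfl fun l hl => ?_
  rw [h l hl]

lemma sum_image_insert_outcomeProb (ha : a ∉ s) (k : ℕ) :
    ∑ ω ∈ (s.powersetCard k).image (insert a), outcomeProb q (insert a s) ω
      = q a * successCountProb q s k := by
  rw [sum_image, successCountProb, mul_sum]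
  · refine sum_congr rfl fun ω _ => ?_
    rw [outcomeProb_insert_left ha, if_pos (mem_insert_self a ω), outcomeProb_insert_right ha]
  · intro ω hω ω' hω' h
    have hω : a ∉ ω := fun h => ha ((mem_powersetCard.1 hω).1 h)
    have hω' : a ∉ ω' := fun h => ha ((mem_powersetCard.1 hω').1 h)
    rw [← erase_insert hω, ← erase_insert hω', h]

lemma successCountProb_insert_zero (ha : a ∉ s) :
    successCountProb q (insert a s) 0 = (1 - q a) * successCountProb q s 0 := by
  simp [successCountProb, outcomeProb_insert_left ha]

lemma successCountProb_insert_succ (ha : a ∉ s) (k : ℕ) :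
    successCountProb q (insert a s) (k + 1)
      = (1 - q a) * successCountProb q s (k + 1) + q a * successCountProb q s k := by
  have hdisj : Disjoint (s.powersetCard (k + 1)) ((s.powersetCard k).image (insert a)) :=
    disjoint_left.2 fun ω hω hω' => by
      obtain ⟨τ, -, rfl⟩ := mem_image.1 hω'
      exact ha ((mem_powersetCard.1 hω).1 (mem_insert_self a τ))
  rw [successCountProb, powersetCard_succ_insert ha, sum_union hdisj,
    sum_image_insert_outcomeProb ha, add_left_inj, successCountProb, mul_sum]
  refine sum_congr rfl fun ω hω => ?_
  rw [outcomeProb_insert_left ha, if_neg fun h => ha ((mem_powersetCard.1 hω).1 h)]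

lemma fewerSuccessesProb_insert (ha : a ∉ s) (j : ℕ) :
    fewerSuccessesProb q (insert a s) (j + 1)
      = (1 - q a) * fewerSuccessesProb q s (j + 1) + q a * fewerSuccessesProb q s j := by
  induction j with
  | zero => simp [fewerSuccessesProb, successCountProb_insert_zero ha]
  | succ j ih =>
    simp only [fewerSuccessesProb, sum_range_succ] at ih ⊢
    rw [ih, successCountProb_insert_succ ha]
    ring

lemma fewerSuccessesProb_insert_le (hq : ∀ l ∈ insert a s, q l ∈ Set.Icc 0 1) (ha : a ∉ s)
    (j : ℕ) : fewerSuccessesProb q (insert a s) j ≤ fewerSuccessesProb q s j := by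
  cases j with
  | zero => simp
  | succ j =>
    have hqs : ∀ l ∈ s, q l ∈ Set.Icc 0 1 := fun l hl => hq l (mem_insert_of_mem hl)
    have hqa := hq a (mem_insert_self a s)
    rw [fewerSuccessesProb_insert ha]
    nlinarith [fewerSuccessesProb_mono hqs j.le_succ, hqa.1]

lemma fewerSuccessesProb_anti {t : Finset α} (hq : ∀ l ∈ t, q l ∈ Set.Icc 0 1)
    (hst : s ⊆ t) (j : ℕ) : fewerSuccessesProb q t j ≤ fewerSuccessesProb q s j := by
  induction t using Finset.eraseInduction with
  | _ t ih =>
    by_cases hts : t ⊆ s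
    · rw [Subset.antisymm hts hst]
    obtain ⟨a, hat, has⟩ := not_subset.1 hts
    have hq' : ∀ l ∈ t.erase a, q l ∈ Set.Icc 0 1 := fun l hl => hq l (mem_of_mem_erase hl)
    calc fewerSuccessesProb q t j
        = fewerSuccessesProb q (insert a (t.erase a)) j := by rw [insert_erase hat]
      _ ≤ fewerSuccessesProb q (t.erase a) j :=
          fewerSuccessesProb_insert_le (by rwa [insert_erase hat]) (notMem_erase a t) j
      _ ≤ fewerSuccessesProb q s j :=
          ih a hat hq' fun x hx => mem_erase.2 ⟨ne_of_mem_of_not_mem hx has, hst hx⟩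

lemma fewerSuccessesProb_comp {β : Type*} [DecidableEq β] {σ : β → α} {t : Finset β}
    (hσ : Set.InjOn σ t) (j : ℕ) :
    fewerSuccessesProb (q ∘ σ) t j = fewerSuccessesProb q (t.image σ) j := by
  induction t using Finset.induction_on generalizing j with
  | empty => simp [fewerSuccessesProb, successCountProb, outcomeProb]
  | insert b t hb ih =>
    have hσt : Set.InjOn σ t := hσ.mono (by simp [Set.subset_insert])
    have hσb : σ b ∉ t.image σ := fun h => by
      obtain ⟨x, hx, hxb⟩ := mem_image.1 h
      rw [hσ (by simp [hx]) (by simp) hxb] at hx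
      exact hb hx
    cases j with
    | zero => simp
    | succ j =>
      rw [image_insert, fewerSuccessesProb_insert hb, fewerSuccessesProb_insert hσb, ih hσt,
        ih hσt]
      rfl

lemma sum_powerset_pow_card_mul_outcomeProb (c : ℝ) (s : Finset α) :
    ∑ ω ∈ s.powerset, c ^ #ω * outcomeProb q s ω = ∏ l ∈ s, (1 - q l + q l * c) := by
  induction s using Finset.induction_on with
  | empty => simp [outcomeProb]
  | insert a s ha ih =>
    have hω : ∀ ω ∈ s.powerset, a ∉ ω := fun ω hω h => ha (mem_powerset.1 hω h)
    rw [sum_powerset_insert ha, prod_insert ha, ← ih, add_mul, mul_sum, mul_sum]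
    congr 1 <;> refine sum_congr rfl fun ω hω' => ?_
    · rw [outcomeProb_insert_left ha, if_neg (hω ω hω')]
      ring
    · rw [outcomeProb_insert_left ha, if_pos (mem_insert_self a ω), outcomeProb_insert_right ha,
        card_insert_of_notMem (hω ω hω'), pow_succ]
      ring

lemma sum_range_pow_mul_successCountProb (c : ℝ) (s : Finset α) :
    ∑ k ∈ range (#s + 1), c ^ k * successCountProb q s k
      = ∏ l ∈ s, (1 - q l + q l * c) := by
  rw [← sum_powerset_pow_card_mul_outcomeProb, sum_powerset]
  refine sum_congr rfl fun k _ => ?_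
  rw [successCountProb, mul_sum]
  exact sum_congr rfl fun ω hω => by rw [(mem_powersetCard.1 hω).2]

theorem fewerSuccessesProb_le_exp (hq : ∀ l ∈ s, q l ∈ Set.Icc 0 1) {j : ℕ}
    (hj : (j : ℝ) ≤ ∑ l ∈ s, q l) :
    fewerSuccessesProb q s j ≤ Real.exp (-(∑ l ∈ s, q l - j) ^ 2 / (2 * #s)) := by
  obtain rfl | hj0 := j.eq_zero_or_pos
  · simpa using (Real.exp_pos _).le
  set μ := ∑ l ∈ s, q l
  have hj0' : (0 : ℝ) < j := Nat.cast_pos.2 hj0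
  have hμ : 0 < μ := hj0'.trans_le hj
  have hμs : μ ≤ #s := by simpa using sum_le_card_nsmul s q 1 fun l hl => (hq l hl).2
  have hjs : j ≤ #s := by exact_mod_cast hj.trans hμs
  -- `c = j / μ` minimises `exp ((c - 1) μ) / c ^ j`.
  set c := (j : ℝ) / μ
  have hc : 0 < c := div_pos hj0' hμ
  have hc1 : c ≤ 1 := (div_le_one hμ).2 hj
  have hmgf : fewerSuccessesProb q s j * c ^ j ≤ Real.exp (j - μ) :=
    calc fewerSuccessesProb q s j * c ^ j
        ≤ ∑ k ∈ range j, c ^ k * successCountProb q s k := by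
          rw [fewerSuccessesProb, sum_mul]
          refine sum_le_sum fun k hk => ?_
          rw [mul_comm]
          exact mul_le_mul_of_nonneg_right
            (pow_le_pow_of_le_one hc.le hc1 (mem_range.1 hk).le) (successCountProb_nonneg hq k)
      _ ≤ ∑ k ∈ range (#s + 1), c ^ k * successCountProb q s k :=
          sum_le_sum_of_subset_of_nonneg (range_subset_range.2 (by omega)) fun k _ _ =>
            mul_nonneg (pow_nonneg hc.le k) (successCountProb_nonneg hq k)
      _ ≤ Real.exp ((c - 1) * μ) := by
          rw [sum_range_pow_mul_successCountProb]
          exact prod_one_sub_add_mul_le_exp hq hc.le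
      _ = Real.exp (j - μ) := by
          rw [sub_mul, div_mul_cancel₀ _ hμ.ne', one_mul]
  calc fewerSuccessesProb q s j
      ≤ Real.exp (j - μ) / c ^ j := (le_div_iff₀ (pow_pos hc j)).2 hmgf
    _ = Real.exp (j - μ + j * Real.log (μ / j)) := by
        rw [Real.exp_add, Real.exp_nat_mul, Real.exp_log (div_pos hμ hj0'), div_eq_mul_inv,
          ← inv_pow, inv_div]
    _ ≤ Real.exp (-(μ - j) ^ 2 / (2 * μ)) := Real.exp_le_exp.2 (sub_add_mul_log_div_le hj0' hj)
    _ ≤ Real.exp (-(μ - j) ^ 2 / (2 * #s)) := by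
        rw [Real.exp_le_exp, neg_div, neg_div, neg_le_neg_iff]
        exact div_le_div_of_nonneg_left (sq_nonneg _) (by positivity) (by linarith)

end PoissonBinomial

lemma fGP_eq_zero_of_lt (p : ℕ → ℝ) {j i : ℕ} (h : i < j) : fGP p j i = 0 := by
  rw [fGP, powersetCard_eq_empty.2 (by simpa using h), filter_empty, sum_empty]

lemma fGP_succ_succ (p : ℕ → ℝ) (j i : ℕ) :
    fGP p (j + 1) (i + 1) = p (i + 1) * successCountProb p (Icc 1 i) j := by
  have hi : i + 1 ∉ Icc 1 i := by simp
  rw [fGP, ← insert_Icc_right_eq_Icc_add_one (Nat.le_add_left 1 i), powersetCard_succ_insert hi,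
    filter_union, filter_false_of_mem, filter_true_of_mem, empty_union]
  · exact sum_image_insert_outcomeProb hi j
  · intro ω hω
    obtain ⟨τ, -, rfl⟩ := mem_image.1 hω
    exact mem_insert_self _ _
  · exact fun ω hω h => hi ((mem_powersetCard.1 hω).1 h)

lemma fGP_succ_eq_sub (p : ℕ → ℝ) (j m : ℕ) :
    fGP p j (m + 1)
      = fewerSuccessesProb p (Icc 1 m) j - fewerSuccessesProb p (Icc 1 (m + 1)) j := by
  cases j with
  | zero => simp [fGP, filter_singleton]
  | succ j =>
    rw [fGP_succ_succ, successCountProb_eq_sub,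
      ← insert_Icc_right_eq_Icc_add_one (Nat.le_add_left 1 m),
      fewerSuccessesProb_insert (by simp)]
    ring

lemma sum_Icc_mul_fGP (p : ℕ → ℝ) (j N : ℕ) :
    ∑ i ∈ Icc j N, (i : ℝ) * fGP p j i
      = ∑ m ∈ range N, fewerSuccessesProb p (Icc 1 m) j
          - N * fewerSuccessesProb p (Icc 1 N) j := by
  have hsub : Icc j N ⊆ range (N + 1) := fun i hi => mem_range.2 (by simp at hi; omega)
  rw [sum_subset hsub fun i hi hij => by
    simp only [mem_range, mem_Icc] at hi hij
    rw [fGP_eq_zero_of_lt p (by omega), mul_zero]]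
  clear hsub
  induction N with
  | zero => simp
  | succ N ih =>
    rw [sum_range_succ, ih, fGP_succ_eq_sub, sum_range_succ]
    push_cast
    ring

lemma sum_Icc_mul_fGP_le {p : ℕ → ℝ} {N : ℕ} (hp : ∀ l ∈ Icc 1 N, p l ∈ Set.Icc 0 1)
    (j : ℕ) :
    ∑ i ∈ Icc j N, (i : ℝ) * fGP p j i
      ≤ ∑ m ∈ range N, fewerSuccessesProb p (Icc 1 m) j := by
  rw [sum_Icc_mul_fGP, sub_le_self_iff]
  exact mul_nonneg N.cast_nonneg (fewerSuccessesProb_nonneg hp j)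

lemma fewerSuccessesProb_le_Icc_card {ν : ℕ → ℝ} (hmono : Monotone ν)
    (hν : ∀ l, ν l ∈ Set.Icc 0 1) {T : Finset ℕ} (hT : ∀ t ∈ T, 1 ≤ t) (j : ℕ) :
    fewerSuccessesProb ν T j ≤ fewerSuccessesProb ν (Icc 1 #T) j := by
  induction T using Finset.induction_on_max generalizing j with
  | empty => simp
  | insert a T hlt ih =>
    have haT : a ∉ T := fun h => lt_irrefl a (hlt a h)
    -- `a` exceeds the `#T` other elements of `T`, all positive, so `ν (#T + 1) ≤ ν a`.
    have hcard : #T + 1 ≤ a := by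
      have hsub : T ⊆ Icc 1 (a - 1) := fun t ht =>
        mem_Icc.2 ⟨hT t (mem_insert_of_mem ht), by have := hlt t ht; omega⟩
      have := card_le_card hsub
      have := hT a (mem_insert_self a T)
      simp only [Nat.card_Icc] at *
      omega
    have ih' := ih (fun t ht => hT t (mem_insert_of_mem ht))
    cases j with
    | zero => simp
    | succ j =>
      have hmonoj := fewerSuccessesProb_mono (fun l _ => hν l) (s := Icc 1 #T) j.le_succ
      rw [card_insert_of_notMem haT, ← insert_Icc_right_eq_Icc_add_one (Nat.le_add_left 1 _),
        fewerSuccessesProb_insert haT, fewerSuccessesProb_insert (by simp)]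
      nlinarith [mul_le_mul_of_nonneg_left (ih' (j + 1)) (sub_nonneg.2 (hν a).2),
        mul_le_mul_of_nonneg_left (ih' j) (hν a).1,
        mul_le_mul_of_nonneg_left hmonoj (sub_nonneg.2 (hmono hcard))]

lemma fewerSuccessesProb_rearrange_le {ν p : ℕ → ℝ} (hmono : Monotone ν)
    (hν : ∀ l, ν l ∈ Set.Icc 0 1) {σ : ℕ → ℕ} {m : ℕ} (hσ : Set.InjOn σ (Icc 1 m))
    (hσ1 : ∀ l ∈ Icc 1 m, 1 ≤ σ l) (hp : ∀ l ∈ Icc 1 m, p l = ν (σ l)) (j : ℕ) :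
    fewerSuccessesProb p (Icc 1 m) j ≤ fewerSuccessesProb ν (Icc 1 m) j := by
  have h := fewerSuccessesProb_le_Icc_card hmono hν (T := (Icc 1 m).image σ)
    (fun t ht => by obtain ⟨l, hl, rfl⟩ := mem_image.1 ht; exact hσ1 l hl) j
  rw [card_image_of_injOn hσ, Nat.card_Icc, Nat.add_sub_cancel,
    ← fewerSuccessesProb_comp hσ] at h
  rwa [fewerSuccessesProb_congr (q' := ν ∘ σ) hp]

lemma sum_successCountProb_Icc_zero_le {ν : ℕ → ℝ} (hmono : Monotone ν)
    (hν : ∀ l, ν l ∈ Set.Icc 0 1) (u : ℕ) :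
    ν 1 * ∑ m ∈ range u, successCountProb ν (Icc 1 m) 0 ≤ 1 := by
  have hstep : ∀ m ∈ range u, ν 1 * successCountProb ν (Icc 1 m) 0
      ≤ successCountProb ν (Icc 1 m) 0 - successCountProb ν (Icc 1 (m + 1)) 0 := by
    intro m _
    rw [← insert_Icc_right_eq_Icc_add_one (Nat.le_add_left 1 m),
      successCountProb_insert_zero (by simp)]
    nlinarith [hmono (Nat.le_add_left 1 m),
      successCountProb_nonneg (fun l _ => hν l) (s := Icc 1 m) 0]
  calc ν 1 * ∑ m ∈ range u, successCountProb ν (Icc 1 m) 0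
      ≤ ∑ m ∈ range u,
          (successCountProb ν (Icc 1 m) 0 - successCountProb ν (Icc 1 (m + 1)) 0) := by
        rw [mul_sum]
        exact sum_le_sum hstep
    _ = 1 - successCountProb ν (Icc 1 u) 0 := by
        rw [sum_range_sub', Icc_eq_empty_of_lt zero_lt_one, successCountProb_empty, if_pos rfl]
    _ ≤ 1 := sub_le_self _ (successCountProb_nonneg (fun l _ => hν l) 0)

lemma sum_successCountProb_Icc_succ_le {ν : ℕ → ℝ} (hmono : Monotone ν)
    (hν : ∀ l, ν l ∈ Set.Icc 0 1) (u k : ℕ) :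
    ν 1 * ∑ m ∈ range u, successCountProb ν (Icc 1 m) (k + 1)
      ≤ ν u * ∑ m ∈ range u, successCountProb ν (Icc 1 m) k := by
  have hstep : ∀ m ∈ range u, ν 1 * successCountProb ν (Icc 1 m) (k + 1)
      ≤ successCountProb ν (Icc 1 m) (k + 1) - successCountProb ν (Icc 1 (m + 1)) (k + 1)
        + ν u * successCountProb ν (Icc 1 m) k := by
    intro m hm
    rw [← insert_Icc_right_eq_Icc_add_one (Nat.le_add_left 1 m),
      successCountProb_insert_succ (by simp)]
    have hnonneg := successCountProb_nonneg (fun l _ => hν l) (s := Icc 1 m)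
    nlinarith [mul_le_mul_of_nonneg_right (hmono (Nat.le_add_left 1 m)) (hnonneg (k + 1)),
      mul_le_mul_of_nonneg_right (hmono (show m + 1 ≤ u from mem_range.1 hm)) (hnonneg k)]
  calc ν 1 * ∑ m ∈ range u, successCountProb ν (Icc 1 m) (k + 1)
      ≤ ∑ m ∈ range u, (successCountProb ν (Icc 1 m) (k + 1)
          - successCountProb ν (Icc 1 (m + 1)) (k + 1)
          + ν u * successCountProb ν (Icc 1 m) k) := by
        rw [mul_sum]
        exact sum_le_sum hstep
    _ = -successCountProb ν (Icc 1 u) (k + 1)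
          + ν u * ∑ m ∈ range u, successCountProb ν (Icc 1 m) k := by
        rw [sum_add_distrib, sum_range_sub', Icc_eq_empty_of_lt zero_lt_one,
          successCountProb_empty, if_neg k.succ_ne_zero, mul_sum, zero_sub]
    _ ≤ ν u * ∑ m ∈ range u, successCountProb ν (Icc 1 m) k := by
        linarith [successCountProb_nonneg (fun l _ => hν l) (s := Icc 1 u) (k + 1)]

lemma sum_successCountProb_Icc_le {ν : ℕ → ℝ} (hmono : Monotone ν)
    (hν : ∀ l, ν l ∈ Set.Icc 0 1) (hν1 : 0 < ν 1) (u k : ℕ) :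
    ∑ m ∈ range u, successCountProb ν (Icc 1 m) k ≤ (ν u / ν 1) ^ k / ν 1 := by
  rw [le_div_iff₀ hν1, mul_comm]
  induction k with
  | zero => simpa using sum_successCountProb_Icc_zero_le hmono hν u
  | succ k ih =>
    calc ν 1 * ∑ m ∈ range u, successCountProb ν (Icc 1 m) (k + 1)
        ≤ ν u * ∑ m ∈ range u, successCountProb ν (Icc 1 m) k :=
          sum_successCountProb_Icc_succ_le hmono hν u k
      _ ≤ ν u * ((ν u / ν 1) ^ k / ν 1) := by
          gcongr
          · exact (hν u).1
          · rwa [le_div_iff₀ hν1, mul_comm]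
      _ = (ν u / ν 1) ^ (k + 1) := by
          rw [pow_succ]
          ring

theorem sum_fewerSuccessesProb_Icc_le {ν : ℕ → ℝ} (hmono : Monotone ν)
    (hν : ∀ l, ν l ∈ Set.Icc 0 1) (hν1 : 0 < ν 1) {u : ℕ} (hu : 1 ≤ u) (j : ℕ) :
    ∑ m ∈ range u, fewerSuccessesProb ν (Icc 1 m) j ≤ j / ν 1 * (ν u / ν 1) ^ j := by
  have hr : 1 ≤ ν u / ν 1 := (one_le_div hν1).2 (hmono hu)
  calc ∑ m ∈ range u, fewerSuccessesProb ν (Icc 1 m) j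
      = ∑ k ∈ range j, ∑ m ∈ range u, successCountProb ν (Icc 1 m) k := sum_comm
    _ ≤ ∑ k ∈ range j, (ν u / ν 1) ^ j / ν 1 := sum_le_sum fun k hk =>
        (sum_successCountProb_Icc_le hmono hν hν1 u k).trans
          (div_le_div_of_nonneg_right (pow_le_pow_right₀ hr (mem_range.1 hk).le) hν1.le)
    _ = j / ν 1 * (ν u / ν 1) ^ j := by
        rw [sum_const, card_range, nsmul_eq_mul]
        ring

lemma sum_Ico_fewerSuccessesProb_Icc_le {ν : ℕ → ℝ} (hν : ∀ l, ν l ∈ Set.Icc 0 1)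
    {u j : ℕ} (hj : (j : ℝ) ≤ ∑ l ∈ Icc 1 u, ν l) (n : ℕ) :
    ∑ m ∈ Ico u n, fewerSuccessesProb ν (Icc 1 m) j
      ≤ n * Real.exp (-((∑ l ∈ Icc 1 u, ν l) - j) ^ 2 / (2 * u)) := by
  have hchernoff := fewerSuccessesProb_le_exp (fun l _ => hν l) hj
  rw [Nat.card_Icc, Nat.add_sub_cancel] at hchernoff
  calc ∑ m ∈ Ico u n, fewerSuccessesProb ν (Icc 1 m) j
      ≤ ∑ m ∈ Ico u n, Real.exp (-((∑ l ∈ Icc 1 u, ν l) - j) ^ 2 / (2 * u)) :=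
        sum_le_sum fun m hm => (fewerSuccessesProb_anti (fun l _ => hν l)
          (Icc_subset_Icc_right (mem_Ico.1 hm).1) j).trans hchernoff
    _ ≤ n * Real.exp (-((∑ l ∈ Icc 1 u, ν l) - j) ^ 2 / (2 * u)) := by
        rw [sum_const, Nat.card_Ico, nsmul_eq_mul]
        gcongr
        exact_mod_cast n.sub_le u

theorem fGP_truncated_expectation_bound_general
    (ν : ℕ → ℝ) (hνmono : Monotone ν) (hν01 : ∀ l, ν l ∈ Set.Ioc (0 : ℝ) 1)
    (n u j : ℕ) (hun : u ≤ n)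
    (hsum : (j : ℝ) < ∑ l ∈ Finset.Icc 1 u, ν l)
    (σ : ℕ → ℕ) (hσ : Set.BijOn σ (Set.Icc 1 n) (Set.Icc 1 n))
    (p : ℕ → ℝ)
    (hp1 : ∀ l, 1 ≤ l → l ≤ n → p l = ν (σ l)) :
    ∑ i ∈ Finset.Icc j n, (i : ℝ) * fGP p j i
      ≤ (j / ν 1) * (ν u / ν 1) ^ j
        + n * Real.exp (-((∑ l ∈ Finset.Icc 1 u, ν l) - j) ^ 2 / (2 * u)) := by
  have hν : ∀ l, ν l ∈ Set.Icc 0 1 := fun l => Set.Ioc_subset_Icc_self (hν01 l)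
  have hu : 1 ≤ u := Nat.one_le_iff_ne_zero.2 fun hu => by
    simp only [hu, Icc_eq_empty_of_lt zero_lt_one, sum_empty] at hsum
    exact (Nat.cast_nonneg j).not_gt hsum
  have hpIcc : ∀ m ≤ n, ∀ l ∈ Icc 1 m, p l = ν (σ l) := fun m hm l hl =>
    hp1 l (mem_Icc.1 hl).1 ((mem_Icc.1 hl).2.trans hm)
  have hσIcc : ∀ m ≤ n, Set.Icc 1 m ⊆ Set.Icc 1 n := fun m hm => Set.Icc_subset_Icc_right hm
  calc ∑ i ∈ Icc j n, (i : ℝ) * fGP p j i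
      ≤ ∑ m ∈ range n, fewerSuccessesProb p (Icc 1 m) j :=
        sum_Icc_mul_fGP_le (fun l hl => hpIcc n le_rfl l hl ▸ hν _) j
    _ ≤ ∑ m ∈ range n, fewerSuccessesProb ν (Icc 1 m) j := sum_le_sum fun m hm =>
        fewerSuccessesProb_rearrange_le hνmono hν
          (by simpa using hσ.injOn.mono (hσIcc m (mem_range.1 hm).le))
          (fun l hl => (hσ.mapsTo (hσIcc m (mem_range.1 hm).le (by simpa using hl))).1)
          (hpIcc m (mem_range.1 hm).le) j
    _ = ∑ m ∈ range u, fewerSuccessesProb ν (Icc 1 m) j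
          + ∑ m ∈ Ico u n, fewerSuccessesProb ν (Icc 1 m) j :=
        (sum_range_add_sum_Ico _ hun).symm
    _ ≤ _ := add_le_add (sum_fewerSuccessesProb_Icc_le hνmono hν (hν01 1).1 hu j)
        (sum_Ico_fewerSuccessesProb_Icc_le hν hsum.le n)

/-- if `p` is a rearrangement of the nondecreasing sequence
`ν_1 ≤ … ≤ ν_n` in `(0,1]` (extended by `ν` beyond `n`), and `j ≤ u ≤ n` with
`∑_{l=1}^u ν_l > j`, then
`∑_{i=j}^n i f_GP(i;j,p) ≤ (j/ν_1)(ν_u/ν_1)^j + n exp(−(∑_{l=1}^u ν_l − j)²/(2u))`. -/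
theorem fGP_truncated_expectation_bound
    (ν : ℕ → ℝ) (hνmono : Monotone ν) (hν01 : ∀ l, ν l ∈ Set.Ioc (0 : ℝ) 1)
    (n u j : ℕ) (hj : 1 ≤ j) (hju : j ≤ u) (hun : u ≤ n)
    (hsum : (j : ℝ) < ∑ l ∈ Finset.Icc 1 u, ν l)
    (σ : ℕ → ℕ) (hσ : Set.BijOn σ (Set.Icc 1 n) (Set.Icc 1 n))
    (p : ℕ → ℝ)
    (hp1 : ∀ l, 1 ≤ l → l ≤ n → p l = ν (σ l))
    (hp2 : ∀ l, n < l → p l = ν l) :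
    ∑ i ∈ Finset.Icc j n, (i : ℝ) * fGP p j i
      ≤ (j / ν 1) * (ν u / ν 1) ^ j
        + n * Real.exp (-((∑ l ∈ Finset.Icc 1 u, ν l) - j) ^ 2 / (2 * u)) :=
  fGP_truncated_expectation_bound_general ν hνmono hν01 n u j hun hsum σ hσ p hp1
end

section
/- In the under-bagging setting, the total bagged weight satisfies, for every point x, 1 − Σ_{i=1}^n V̄^u_i(x) ≤ exp( − (s − k)² / (2n) ), provided k ≤ s. -/
/-!
If at least `k` of the first `n` points are accepted, then exactly `k` indices `i ≤ n` satisfy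
`ξ_i = 1` and `∑_{l ≤ i} ξ_l ≤ k`; taking expectations, `∑ V̄_i` is at least the probability that
`k` points are accepted. The deficit `1 - ∑ V̄_i` is therefore at most `P(∑_{l ≤ n} ξ_l < k)`,
a lower deviation of size `s - k` from the mean, which Hoeffding's inequality bounds by
`exp(-2(s - k)² / n)`.
-/

open MeasureTheory ProbabilityTheory Finset

lemma integral_natCast_eq_measureReal_eq_one {Ω : Type*} [MeasurableSpace Ω] {μ : Measure Ω}
    {f : Ω → ℕ} (hf : Measurable f) (h01 : ∀ ω, f ω ≤ 1) :
    μ[fun ω => (f ω : ℝ)] = μ.real {ω | f ω = 1} := by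
  have hind : (fun ω => (f ω : ℝ)) = {ω | f ω = 1}.indicator 1 := funext fun ω => by
    rcases Nat.le_one_iff_eq_zero_or_eq_one.mp (h01 ω) with h | h <;> simp [h]
  rw [hind]
  exact integral_indicator_one (hf (measurableSet_singleton 1))

lemma card_filter_partialSum_le_and_eq_one_eq_min (f : ℕ → ℕ) (hf : ∀ l, f l ≤ 1) (k n : ℕ) :
    #{i ∈ Icc 1 n | ∑ l ∈ Icc 1 i, f l ≤ k ∧ f i = 1} = min (∑ l ∈ Icc 1 n, f l) k := by
  rw [card_filter]
  induction n with
  | zero => simp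
  | succ m ih =>
    rw [sum_Icc_succ_top (by omega), sum_Icc_succ_top (by omega), ih]
    rcases Nat.le_one_iff_eq_zero_or_eq_one.mp (hf (m + 1)) with h | h
    · simp [h]
    · simp only [h, and_true]
      split_ifs <;> omega

lemma natCast_mul_measureReal_le_sum_of_le_card {Ω ι : Type*} [MeasurableSpace Ω]
    {μ : Measure Ω} [IsFiniteMeasure μ] (s : Finset ι) {A : ι → Set Ω}
    [∀ ω, DecidablePred (ω ∈ A ·)]
    (hA : ∀ i ∈ s, MeasurableSet (A i)) {B : Set Ω} (hB : MeasurableSet B) {k : ℕ}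
    (hcard : ∀ ω ∈ B, k ≤ #{i ∈ s | ω ∈ A i}) :
    k * μ.real B ≤ ∑ i ∈ s, μ.real (A i) := by
  have hcount : ∀ ω, ∑ i ∈ s, (A i).indicator 1 ω = (#{i ∈ s | ω ∈ A i} : ℝ) := fun ω => by
    simp only [Set.indicator_apply, Pi.one_apply, sum_boole]
  calc (k : ℝ) * μ.real B = ∫ ω, B.indicator (fun _ => (k : ℝ)) ω ∂μ := by
        rw [integral_indicator_const _ hB, smul_eq_mul, mul_comm]
    _ ≤ ∫ ω, ∑ i ∈ s, (A i).indicator 1 ω ∂μ := by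
        refine integral_mono ((integrable_const _).indicator hB)
          (integrable_finsetSum _ fun i hi => (integrable_const 1).indicator (hA i hi))
          fun ω => ?_
        rw [hcount]
        by_cases hω : ω ∈ B
        · simpa [Set.indicator_of_mem hω] using hcard ω hω
        · simp [Set.indicator_of_notMem hω]
    _ = ∑ i ∈ s, μ.real (A i) := by
        rw [integral_finsetSum _ fun i hi => (integrable_const 1).indicator (hA i hi)]
        exact sum_congr rfl fun i hi => integral_indicator_one (hA i hi)

lemma one_sub_div_sum_measureReal_le_measureReal_lt {Ω : Type*} [MeasurableSpace Ω]
    (P : Measure Ω) [IsProbabilityMeasure P] (ξ : ℕ → Ω → ℕ) (hmeas : ∀ i, Measurable (ξ i))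
    (h01 : ∀ i ω, ξ i ω ≤ 1) {k : ℕ} (hk : 0 < k) (n : ℕ) :
    1 - (1 / k : ℝ) * ∑ i ∈ Icc 1 n, P.real {ω | ∑ l ∈ Icc 1 i, ξ l ω ≤ k ∧ ξ i ω = 1} ≤
      P.real {ω | ∑ l ∈ Icc 1 n, ξ l ω < k} := by
  have hsum_meas : ∀ m, Measurable fun ω => ∑ l ∈ Icc 1 m, ξ l ω := fun m =>
    Finset.measurable_sum _ fun l _ => hmeas l
  have hB : MeasurableSet {ω | k ≤ ∑ l ∈ Icc 1 n, ξ l ω} := hsum_meas n measurableSet_Ici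
  have hfew : P.real {ω | ∑ l ∈ Icc 1 n, ξ l ω < k} =
      1 - P.real {ω | k ≤ ∑ l ∈ Icc 1 n, ξ l ω} := by
    rw [← probReal_compl_eq_one_sub hB]
    simp only [Set.compl_ofPred, not_le]
  have hmany : k * P.real {ω | k ≤ ∑ l ∈ Icc 1 n, ξ l ω} ≤
      ∑ i ∈ Icc 1 n, P.real {ω | ∑ l ∈ Icc 1 i, ξ l ω ≤ k ∧ ξ i ω = 1} := by
    refine natCast_mul_measureReal_le_sum_of_le_card (Icc 1 n)
      (A := fun i => {ω | ∑ l ∈ Icc 1 i, ξ l ω ≤ k ∧ ξ i ω = 1})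
      (fun i _ => (hsum_meas i measurableSet_Iic).inter (hmeas i (measurableSet_singleton 1))) hB
      fun ω hω => ?_
    show k ≤ #{i ∈ Icc 1 n | ∑ l ∈ Icc 1 i, ξ l ω ≤ k ∧ ξ i ω = 1}
    rw [card_filter_partialSum_le_and_eq_one_eq_min (ξ · ω) (h01 · ω)]
    exact le_min hω le_rfl
  rw [hfew, one_div, ← div_eq_inv_mul, sub_le_sub_iff_left, le_div_iff₀ (by exact_mod_cast hk)]
  linarith

lemma measureReal_sum_le_sum_integral_sub_le {Ω ι : Type*} [MeasurableSpace Ω] {μ : Measure Ω}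
    [IsProbabilityMeasure μ] {X : ι → Ω → ℝ} (hindep : iIndepFun X μ) (s : Finset ι)
    (hmeas : ∀ i ∈ s, AEMeasurable (X i) μ) (hX : ∀ i ∈ s, ∀ᵐ ω ∂μ, X i ω ∈ Set.Icc 0 1)
    {ε : ℝ} (hε : 0 ≤ ε) :
    μ.real {ω | ∑ i ∈ s, X i ω ≤ ∑ i ∈ s, μ[X i] - ε} ≤ Real.exp (-2 * ε ^ 2 / #s) := by
  have hY : iIndepFun (fun i ω => μ[X i] - X i ω) μ := by
    exact hindep.comp (fun i (x : ℝ) => μ[X i] - x) fun i => by fun_prop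
  have hsub : ∀ i ∈ s, HasSubgaussianMGF (fun ω => μ[X i] - X i ω) (1 / 4) μ := fun i hi => by
    convert (hasSubgaussianMGF_of_mem_Icc (hmeas i hi) (hX i hi)).neg using 1
    · ext ω
      simp
    · norm_num
  calc μ.real {ω | ∑ i ∈ s, X i ω ≤ ∑ i ∈ s, μ[X i] - ε}
      = μ.real {ω | ε ≤ ∑ i ∈ s, (μ[X i] - X i ω)} := by
        simp only [sum_sub_distrib, le_sub_comm]
    _ ≤ Real.exp (-ε ^ 2 / (2 * ((∑ i ∈ s, 1 / 4 : NNReal) : ℝ))) :=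
        HasSubgaussianMGF.measure_sum_ge_le_of_iIndepFun hY hsub hε
    _ = Real.exp (-2 * ε ^ 2 / #s) := by
        push_cast [sum_const, nsmul_eq_mul]
        ring_nf

lemma measureReal_natCast_sum_le_le_exp {Ω ι : Type*} [MeasurableSpace Ω] {μ : Measure Ω}
    [IsProbabilityMeasure μ] {ξ : ι → Ω → ℕ} (hindep : iIndepFun ξ μ)
    (hmeas : ∀ i, Measurable (ξ i)) (h01 : ∀ i ω, ξ i ω ≤ 1) (s : Finset ι) {t : ℝ}
    (ht : t ≤ ∑ i ∈ s, μ.real {ω | ξ i ω = 1}) :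
    μ.real {ω | ((∑ i ∈ s, ξ i ω : ℕ) : ℝ) ≤ t} ≤
      Real.exp (-2 * (∑ i ∈ s, μ.real {ω | ξ i ω = 1} - t) ^ 2 / #s) := by
  have hmean : ∀ i, μ[fun ω => (ξ i ω : ℝ)] = μ.real {ω | ξ i ω = 1} := fun i =>
    integral_natCast_eq_measureReal_eq_one (hmeas i) (h01 i)
  have h := measureReal_sum_le_sum_integral_sub_le
    (hindep.comp (fun _ (m : ℕ) => (m : ℝ)) fun _ => measurable_from_top) s
    (fun i _ => (measurable_from_top.comp (hmeas i)).aemeasurable)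
    (fun i _ => ae_of_all _ fun ω => ⟨Nat.cast_nonneg _, Nat.cast_le_one.2 (h01 i ω)⟩)
    (sub_nonneg.2 ht)
  simpa only [Function.comp_apply, hmean, sub_sub_cancel, Nat.cast_sum] using h

theorem underbagging_total_weight_bound_general
    {Ω : Type*} [MeasurableSpace Ω] (P : Measure Ω) [IsProbabilityMeasure P]
    (n k : ℕ) (hk : 1 ≤ k)
    (s : ℝ) (hks : (k : ℝ) ≤ s)
    (p : ℕ → ℝ)
    (hs : ∑ i ∈ Finset.Icc 1 n, p i = s)
    (ξ : ℕ → Ω → ℕ) (hmeas : ∀ i, Measurable (ξ i))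
    (h01 : ∀ i ω, ξ i ω ≤ 1)
    (hindep : iIndepFun ξ P)
    (hpi : ∀ i, (P {ω | ξ i ω = 1}).toReal = p i)
    (Vbar : ℕ → ℝ)
    (hV : ∀ i, Vbar i = (1 / k : ℝ) *
      (P {ω | (∑ l ∈ Finset.Icc 1 i, ξ l ω) ≤ k ∧ ξ i ω = 1}).toReal) :
    1 - ∑ i ∈ Finset.Icc 1 n, Vbar i ≤ Real.exp (-(s - k) ^ 2 / (2 * n)) := by
  have hmean : ∑ i ∈ Icc 1 n, P.real {ω | ξ i ω = 1} = s := hs ▸ sum_congr rfl fun i _ => hpi i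
  have hVsum : ∑ i ∈ Icc 1 n, Vbar i =
      (1 / k : ℝ) * ∑ i ∈ Icc 1 n, P.real {ω | ∑ l ∈ Icc 1 i, ξ l ω ≤ k ∧ ξ i ω = 1} := by
    rw [mul_sum]
    exact sum_congr rfl fun i _ => hV i
  have hgap : 0 ≤ (s - k) ^ 2 / (2 * n) := by positivity
  calc 1 - ∑ i ∈ Icc 1 n, Vbar i ≤ P.real {ω | ∑ l ∈ Icc 1 n, ξ l ω < k} :=
        hVsum ▸ one_sub_div_sum_measureReal_le_measureReal_lt P ξ hmeas h01 hk n
    _ ≤ P.real {ω | ((∑ l ∈ Icc 1 n, ξ l ω : ℕ) : ℝ) ≤ k} :=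
        measureReal_mono fun ω (hω : _ < k) => by exact_mod_cast hω.le
    _ ≤ Real.exp (-2 * (s - k) ^ 2 / #(Icc 1 n)) :=
        hmean ▸ measureReal_natCast_sum_le_le_exp hindep hmeas h01 _ (hmean ▸ hks)
    _ ≤ Real.exp (-(s - k) ^ 2 / (2 * n)) := by
        rw [Nat.card_Icc, Nat.add_sub_cancel, Real.exp_le_exp,
          show -2 * (s - k) ^ 2 / n = -4 * ((s - k) ^ 2 / (2 * n)) by ring, neg_div]
        linarith

/-- in the under-bagging setting (each of the `n` nearest neighbors of `x` is
independently accepted, with acceptance probabilities `p_i ∈ (0,1]` summing to `s`), the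
total bagged weight `∑_{i=1}^n V̄^u_i(x)`, where
`V̄^u_i(x) = (1/k) P(∑_{l=1}^i ξ_l ≤ k, ξ_i = 1)`, satisfies
`1 − ∑_{i=1}^n V̄^u_i(x) ≤ exp(−(s−k)²/(2n))` provided `k ≤ s`. -/
theorem underbagging_total_weight_bound
    {Ω : Type*} [MeasurableSpace Ω] (P : Measure Ω) [IsProbabilityMeasure P]
    (n k : ℕ) (hn : 0 < n) (hk : 1 ≤ k)
    (s : ℝ) (hks : (k : ℝ) ≤ s)
    (p : ℕ → ℝ) (hp : ∀ i, p i ∈ Set.Ioc (0 : ℝ) 1)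
    (hs : ∑ i ∈ Finset.Icc 1 n, p i = s)
    (ξ : ℕ → Ω → ℕ) (hmeas : ∀ i, Measurable (ξ i))
    (h01 : ∀ i ω, ξ i ω ≤ 1)
    (hindep : iIndepFun ξ P)
    (hpi : ∀ i, (P {ω | ξ i ω = 1}).toReal = p i)
    (Vbar : ℕ → ℝ)
    (hV : ∀ i, Vbar i = (1 / k : ℝ) *
      (P {ω | (∑ l ∈ Finset.Icc 1 i, ξ l ω) ≤ k ∧ ξ i ω = 1}).toReal) :
    1 - ∑ i ∈ Finset.Icc 1 n, Vbar i ≤ Real.exp (-(s - k) ^ 2 / (2 * n)) :=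
  underbagging_total_weight_bound_general P n k hk s hks p hs ξ hmeas h01 hindep hpi Vbar hV
end
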